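/- arXiv:2208.03539 — 2 statements merged into one kernel-verified Lean document; each statement's English description precedes it below -/
import Mathlib

section
/- Fix a positive integer m and work in the polynomial ring ℤ[α] in the countably many indeterminates α_m, α_{m+1}, α_{m+2}, …. Let Λ^{(m)} = (λ_{i,j})_{i,j∈ℕ} be the upper-triangular matrix with λ_{0,j} = 1, λ_{i,j} = Σ_{j ≥ ℓ_1 ≥ ⋯ ≥ ℓ_i ≥ i} ∏_{k=1}^{i} α_{k·m+ℓ_k} for 1 ≤ i ≤ j, and λ_{i,j} = 0 for i > j. Then Λ^{(m)} is totally positive with respect to the coefficientwise order on ℤ[α]: for every p ≥ 1 and all strictly increasing tuples of row indices i_1 < ⋯ < i_p and column indices j_1 < ⋯ < j_p in ℕ, every coefficient of the polynomial det((λ_{i_a, j_b})_{1≤a,b≤p}) ∈ ℤ[α] is a nonnegative integer. -/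
/-!
Write `λ_{i,j} = ∑_{ℓ ≤ j} μ_{i,ℓ}`, where `μ_{i,ℓ}` (`lamLead`) collects the terms with
leading index `ℓ_1 = ℓ`. Then `μ_{0,ℓ} = [ℓ = 0]`, `μ_{i,0} = 0` for `i > 0`, and
`μ_{i+1,ℓ+1} = α_{m+ℓ+1} · σ(λ_{i,ℓ})`, where the substitution `σ : α_n ↦ α_{n+m+1}` preserves
nonnegativity of coefficients.

In a minor of `Λ` with columns `j_1 < ⋯ < j_p`, column `b` is the sum of the `μ`-columns over
`ℓ ≤ j_b`, a partial sum of the block sums over `(j_{b-1}, j_b]`. Passing to the block sums is a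
unitriangular change of columns, so by multilinearity the minor is a sum of minors of `μ` with
columns `ℓ_b ∈ (j_{b-1}, j_b]`, which are automatically strictly increasing. Such a minor vanishes
if exactly one of its first row and column has index `0`; if both do, expanding along the entry
`μ_{0,0} = 1` removes them; and once all indices are positive it is a monomial times `σ` of a
minor of `Λ` whose row indices are all smaller by one. Induction on the largest row index
concludes.
-/

open Finset

/-- The entries `λ_{i,j}` of the upper-triangular matrix `Λ^{(m)}` over `ℤ[α]`
(the polynomial ring `MvPolynomial ℕ ℤ`, where the variable `X i` stands for `α_i`):
`λ_{0,j} = 1` and, for `i ≥ 1`,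
`λ_{i,j} = Σ_{j ≥ ℓ_1 ≥ ⋯ ≥ ℓ_i ≥ i} ∏_{k=1}^{i} α_{k·m+ℓ_k}` (an empty sum, hence `0`,
when `i > j`). -/
noncomputable def lamEntry (m : ℕ) (i j : ℕ) : MvPolynomial ℕ ℤ :=
  if i = 0 then 1
  else
    ∑ ℓ ∈ Finset.univ.filter
        (fun ℓ : Fin i → Fin (j + 1) =>
          (∀ k l : Fin i, k ≤ l → (ℓ l : ℕ) ≤ (ℓ k : ℕ)) ∧ ∀ k : Fin i, i ≤ (ℓ k : ℕ)),
      ∏ k : Fin i, MvPolynomial.X (((k : ℕ) + 1) * m + (ℓ k : ℕ))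

open MvPolynomial Matrix

namespace MvPolynomial

variable {σ τ R : Type*} [CommSemiring R] [PartialOrder R] [IsOrderedRing R]

variable (σ R) in
def nonnegCoeffs : Subsemiring (MvPolynomial σ R) where
  carrier := {P | ∀ d, 0 ≤ P.coeff d}
  zero_mem' _ := by simp
  one_mem' d := by
    classical
    rw [coeff_one]
    split_ifs <;> simp
  add_mem' hP hQ d := by
    rw [coeff_add]
    exact add_nonneg (hP d) (hQ d)
  mul_mem' hP hQ d := by
    classical
    rw [coeff_mul]
    exact sum_nonneg fun _ _ => mul_nonneg (hP _) (hQ _)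

theorem mem_nonnegCoeffs {P : MvPolynomial σ R} : P ∈ nonnegCoeffs σ R ↔ ∀ d, 0 ≤ P.coeff d :=
  Iff.rfl

theorem X_mem_nonnegCoeffs (n : σ) : X n ∈ nonnegCoeffs σ R := fun d => by
  classical
  rw [coeff_X]
  split_ifs <;> simp

theorem rename_mem_nonnegCoeffs {f : σ → τ} (hf : f.Injective) {P : MvPolynomial σ R}
    (hP : P ∈ nonnegCoeffs σ R) : rename f P ∈ nonnegCoeffs τ R := fun d => by
  by_cases h : coeff d (rename f P) = 0
  · exact h.ge
  · obtain ⟨u, rfl, -⟩ := coeff_rename_ne_zero f P d h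
    rw [coeff_rename_mapDomain f hf]
    exact hP u

end MvPolynomial

namespace Matrix

variable {n κ R : Type*} [Fintype n] [DecidableEq n] [CommRing R]

theorem det_of_sum_col (s : n → Finset κ) (f : n → κ → R) :
    det (of fun x y => ∑ ℓ ∈ s y, f x ℓ) =
      ∑ r ∈ Fintype.piFinset s, det (of fun x y => f x (r y)) := by
  rw [← det_transpose]
  convert (detRowAlternating (R := R) (n := n)).map_sum_finset (fun y ℓ x => f x ℓ) s using 1
  · congr 1
    ext y x
    simp [Finset.sum_apply]
  · refine sum_congr rfl fun r _ => ?_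
    rw [← det_transpose]
    rfl

theorem det_of_sum_col_of_monotone [LinearOrder n] [LocallyFiniteOrderBot n] [DecidableEq κ]
    {s : n → Finset κ} (hs : Monotone s) (f : n → κ → R) :
    det (of fun x y => ∑ ℓ ∈ s y, f x ℓ) =
      ∑ r ∈ Fintype.piFinset (disjointed s), det (of fun x y => f x (r y)) := by
  let U : Matrix n n R := of fun y' y => if y' ≤ y then 1 else 0
  have hU : U.det = 1 := by
    rw [det_of_isUpperTriangular (M := U) fun y' y h => if_neg (not_le.mpr h)]
    exact prod_eq_one fun y _ => if_pos le_rfl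
  have hsum (x y) : ∑ ℓ ∈ s y, f x ℓ = ∑ y' ∈ Iic y, ∑ ℓ ∈ disjointed s y', f x ℓ := by
    rw [← sum_disjiUnion _ _ ((disjoint_disjointed s).set_pairwise _),
      Finset.disjiUnion_Iic_disjointed, hs.partialSups_eq]
  have hmul : (of fun x y => ∑ ℓ ∈ s y, f x ℓ) =
      (of fun x y => ∑ ℓ ∈ disjointed s y, f x ℓ) * U := by
    ext x y
    simp [hsum, U, mul_apply, sum_ite, filter_ge_eq_Iic]
  rw [hmul, det_mul, hU, mul_one, det_of_sum_col]

end Matrix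

theorem strictMono_of_mem_piFinset_disjointed_Iic {n κ : Type*} [LinearOrder n]
    [LocallyFiniteOrderBot n] [Fintype n] [LinearOrder κ] [LocallyFiniteOrderBot κ]
    {c r : n → κ} (hr : r ∈ Fintype.piFinset (disjointed fun y => Iic (c y))) :
    StrictMono r := by
  intro y' y hy
  rw [Fintype.mem_piFinset] at hr
  have hy' : r y' ≤ c y' := mem_Iic.mp (disjointed_le (fun y => Iic (c y)) y' (hr y'))
  have hy : r y ∉ Iic (c y') := fun h =>
    (mem_sdiff.mp (hr y)).2 (le_sup (f := fun y => Iic (c y)) (mem_Iio.mpr hy) h)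
  exact hy'.trans_lt (not_le.mp (mt mem_Iic.mpr hy))

theorem Fin.antitone_cons {α : Type*} [Preorder α] {n : ℕ} {f : Fin n → α} {a : α} :
    Antitone (Fin.cons a f : Fin (n + 1) → α) ↔ (∀ k, f k ≤ a) ∧ Antitone f := by
  simpa only [antitone_iff_forall_lt, Relator.LiftFun, ge_iff_le] using
    Fin.liftFun_cons (r := (· ≥ ·)) (f := f) (a := a)

open Classical in
def antitoneSeqs (i j : ℕ) : Finset (Fin i → ℕ) :=
  {ℓ ∈ Fintype.piFinset fun _ => Icc i j | Antitone ℓ}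

@[simp]
theorem mem_antitoneSeqs {i j : ℕ} {ℓ : Fin i → ℕ} :
    ℓ ∈ antitoneSeqs i j ↔ (∀ k, i ≤ ℓ k ∧ ℓ k ≤ j) ∧ Antitone ℓ := by
  simp [antitoneSeqs]

theorem cons_mem_antitoneSeqs_succ {i j t : ℕ} {ℓ : Fin i → ℕ} :
    (Fin.cons (t + 1) (fun k => ℓ k + 1) : Fin (i + 1) → ℕ) ∈ antitoneSeqs (i + 1) j ↔
      t < j ∧ ℓ ∈ antitoneSeqs i t := by
  have : Antitone (fun k => ℓ k + 1) ↔ Antitone ℓ := by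
    simp only [Antitone, add_le_add_iff_right]
  simp only [mem_antitoneSeqs, Fin.forall_fin_succ, Fin.cons_zero, Fin.cons_succ,
    Fin.antitone_cons, this, add_le_add_iff_right]
  constructor
  · rintro ⟨⟨⟨-, htj⟩, hℓ⟩, hℓt, hanti⟩
    exact ⟨htj, fun k => ⟨(hℓ k).1, hℓt k⟩, hanti⟩
  · rintro ⟨htj, hℓ, hanti⟩
    have hit : i ≤ t := by
      rcases i.eq_zero_or_pos with rfl | hi
      · exact Nat.zero_le t
      · exact (hℓ ⟨0, hi⟩).1.trans (hℓ ⟨0, hi⟩).2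
    exact ⟨⟨⟨by omega, htj⟩, fun k => ⟨(hℓ k).1, (hℓ k).2.trans_lt htj⟩⟩,
      fun k => (hℓ k).2, hanti⟩

theorem eq_cons_of_mem_antitoneSeqs_succ {i j : ℕ} {ℓ : Fin (i + 1) → ℕ}
    (hℓ : ℓ ∈ antitoneSeqs (i + 1) j) :
    (Fin.cons (ℓ 0 - 1 + 1) fun k => ℓ k.succ - 1 + 1) = ℓ := by
  have hpos (k) : 1 ≤ ℓ k := le_trans (by omega) ((mem_antitoneSeqs.mp hℓ).1 k).1
  simp only [Nat.sub_add_cancel (hpos _)]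
  exact Fin.cons_self_tail ℓ

noncomputable def lam (m i j : ℕ) : MvPolynomial ℕ ℤ :=
  ∑ ℓ ∈ antitoneSeqs i j, ∏ k : Fin i, X (((k : ℕ) + 1) * m + ℓ k)

theorem lam_zero_left (m j : ℕ) : lam m 0 j = 1 := by
  have : antitoneSeqs 0 j = {finZeroElim} := by
    ext ℓ
    simp [Subsingleton.elim ℓ finZeroElim, Subsingleton.antitone]
  simp [lam, this]

theorem lam_succ_left (m i j : ℕ) :
    lam m (i + 1) j = ∑ t ∈ range j, X (m + t + 1) * rename (· + (m + 1)) (lam m i t) := by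
  simp only [lam, map_sum, map_prod, rename_X, mul_sum]
  rw [sum_sigma']
  symm
  refine sum_nbij' (fun q => Fin.cons (q.1 + 1) fun k => q.2 k + 1)
    (fun ℓ => ⟨ℓ 0 - 1, fun k => ℓ k.succ - 1⟩) ?_ ?_ ?_ ?_ ?_
  · rintro ⟨t, ℓ⟩ h
    rw [cons_mem_antitoneSeqs_succ]
    simpa using h
  · intro ℓ h
    have h' := eq_cons_of_mem_antitoneSeqs_succ h ▸ h
    rw [cons_mem_antitoneSeqs_succ] at h'
    simpa using h'
  · rintro ⟨t, ℓ⟩ -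
    simp
  · intro ℓ h
    exact eq_cons_of_mem_antitoneSeqs_succ h
  · rintro ⟨t, ℓ⟩ -
    simp only [Fin.prod_univ_succ, Fin.cons_zero, Fin.cons_succ, Fin.val_zero, Fin.val_succ]
    congr 1
    · ring_nf
    · refine prod_congr rfl fun k _ => ?_
      ring_nf

theorem lamEntry_eq_lam (m i j : ℕ) : lamEntry m i j = lam m i j := by
  rw [lamEntry]
  split_ifs with hi
  · rw [hi, lam_zero_left]
  refine sum_nbij (fun ℓ k => (ℓ k : ℕ)) ?_ ?_ ?_ fun _ _ => rfl
  · intro ℓ hℓ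
    simp only [mem_filter, mem_univ, true_and] at hℓ
    exact mem_antitoneSeqs.mpr ⟨fun k => ⟨hℓ.2 k, Fin.is_le _⟩, hℓ.1⟩
  · intro ℓ _ ℓ' _ h
    funext k
    exact Fin.ext (congrFun h k)
  · intro ℓ hℓ
    rw [mem_coe, mem_antitoneSeqs] at hℓ
    refine ⟨fun k => ⟨ℓ k, Nat.lt_succ_of_le (hℓ.1 k).2⟩, ?_, rfl⟩
    simp only [coe_filter, mem_univ, true_and, Set.mem_ofPred_eq]
    exact ⟨hℓ.2, fun k => (hℓ.1 k).1⟩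

noncomputable def lamLead (m : ℕ) : ℕ → ℕ → MvPolynomial ℕ ℤ
  | 0, 0 => 1
  | 0, _ + 1 => 0
  | _ + 1, 0 => 0
  | i + 1, ℓ + 1 => X (m + ℓ + 1) * rename (· + (m + 1)) (lam m i ℓ)

theorem lamLead_zero_left_of_pos (m : ℕ) {ℓ : ℕ} (hℓ : 0 < ℓ) : lamLead m 0 ℓ = 0 := by
  obtain ⟨ℓ, rfl⟩ := Nat.exists_eq_add_one_of_ne_zero hℓ.ne'
  rfl

theorem lamLead_zero_right_of_pos (m : ℕ) {i : ℕ} (hi : 0 < i) : lamLead m i 0 = 0 := by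
  obtain ⟨i, rfl⟩ := Nat.exists_eq_add_one_of_ne_zero hi.ne'
  rfl

theorem lam_eq_sum_lamLead (m i j : ℕ) : lam m i j = ∑ ℓ ∈ Iic j, lamLead m i ℓ := by
  rw [← Nat.range_succ_eq_Iic, sum_range_succ']
  cases i with
  | zero => simp [lam_zero_left, lamLead]
  | succ i => simp [lam_succ_left, lamLead]

theorem det_lamLead_succ (m : ℕ) {p : ℕ} (ri r : Fin p → ℕ) :
    det (of fun x y => lamLead m (ri x + 1) (r y + 1)) =
      (∏ y, X (m + r y + 1)) * rename (· + (m + 1)) (det (of fun x y => lam m (ri x) (r y))) := by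
  rw [AlgHom.map_det, ← det_mul_row]
  rfl

theorem det_lamLead_mem (m : ℕ) {N : ℕ}
    (ih : ∀ {q : ℕ} (ri cj : Fin q → ℕ), StrictMono ri → Monotone cj → (∀ x, ri x < N) →
      det (of fun x y => lam m (ri x) (cj y)) ∈ nonnegCoeffs ℕ ℤ)
    {p : ℕ} (ri r : Fin p → ℕ) (hri : StrictMono ri) (hr : StrictMono r)
    (hN : ∀ x, ri x < N + 1) :
    det (of fun x y => lamLead m (ri x) (r y)) ∈ nonnegCoeffs ℕ ℤ := by
  have of_pos {q : ℕ} (a b : Fin q → ℕ) (ha : StrictMono a) (hb : StrictMono b)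
      (haN : ∀ x, a x < N + 1) (ha₀ : ∀ x, 0 < a x) (hb₀ : ∀ y, 0 < b y) :
      det (of fun x y => lamLead m (a x) (b y)) ∈ nonnegCoeffs ℕ ℤ := by
    obtain ⟨a, rfl⟩ : ∃ a' : Fin q → ℕ, a = fun x => a' x + 1 :=
      ⟨fun x => a x - 1, funext fun x => (Nat.sub_add_cancel (ha₀ x)).symm⟩
    obtain ⟨b, rfl⟩ : ∃ b' : Fin q → ℕ, b = fun y => b' y + 1 :=
      ⟨fun y => b y - 1, funext fun y => (Nat.sub_add_cancel (hb₀ y)).symm⟩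
    rw [det_lamLead_succ]
    refine mul_mem (prod_mem fun y _ => X_mem_nonnegCoeffs _)
      (rename_mem_nonnegCoeffs (add_left_injective _) (ih a b ?_ ?_ fun x => ?_))
    · exact fun x x' h => Nat.succ_lt_succ_iff.mp (ha h)
    · exact fun y y' h => Nat.succ_le_succ_iff.mp (hb.monotone h)
    · exact Nat.succ_lt_succ_iff.mp (haN x)
  cases p with
  | zero =>
    rw [det_fin_zero]
    exact one_mem _
  | succ q =>
    have hri_succ (x : Fin q) : 0 < ri x.succ := pos_of_gt (hri (Fin.succ_pos x))
    have hr_succ (y : Fin q) : 0 < r y.succ := pos_of_gt (hr (Fin.succ_pos y))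
    rcases Nat.eq_zero_or_pos (ri 0) with hri0 | hri0 <;>
      rcases Nat.eq_zero_or_pos (r 0) with hr0 | hr0
    · rw [det_succ_row_zero, Fin.sum_univ_succ]
      simp only [of_apply, hri0, hr0, lamLead_zero_left_of_pos m (hr_succ _)]
      simp only [lamLead, Fin.val_zero, pow_zero, mul_one, one_mul, mul_zero, zero_mul,
        sum_const_zero, add_zero, Fin.succAbove_zero]
      exact of_pos _ _ (hri.comp (Fin.strictMono_succ)) (hr.comp (Fin.strictMono_succ))
        (fun x => hN x.succ) hri_succ hr_succ
    · rw [det_eq_zero_of_row_eq_zero 0 fun y => ?_]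
      · exact zero_mem _
      · rw [of_apply, hri0]
        exact lamLead_zero_left_of_pos m (hr0.trans_le (hr.monotone (Fin.zero_le y)))
    · rw [det_eq_zero_of_column_eq_zero 0 fun x => ?_]
      · exact zero_mem _
      · rw [of_apply, hr0]
        exact lamLead_zero_right_of_pos m (hri0.trans_le (hri.monotone (Fin.zero_le x)))
    · exact of_pos ri r hri hr hN (fun x => hri0.trans_le (hri.monotone (Fin.zero_le x)))
        fun y => hr0.trans_le (hr.monotone (Fin.zero_le y))

theorem det_lam_mem_of_lt (m N : ℕ) : ∀ {p : ℕ} (ri cj : Fin p → ℕ), StrictMono ri → Monotone cj →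
    (∀ x, ri x < N) → det (of fun x y => lam m (ri x) (cj y)) ∈ nonnegCoeffs ℕ ℤ := by
  induction N with
  | zero =>
    intro p ri cj _ _ hN
    cases p with
    | zero =>
      rw [det_fin_zero]
      exact one_mem _
    | succ p => exact absurd (hN 0) (Nat.not_lt_zero _)
  | succ N ih =>
    intro p ri cj hri hcj hN
    simp_rw [lam_eq_sum_lamLead]
    rw [det_of_sum_col_of_monotone fun a b h => Iic_subset_Iic.mpr (hcj h)]
    exact sum_mem fun r hr =>
      det_lamLead_mem m ih ri r hri (strictMono_of_mem_piFinset_disjointed_Iic hr) hN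

theorem det_lam_mem (m : ℕ) {p : ℕ} (ri cj : Fin p → ℕ) (hri : StrictMono ri)
    (hcj : Monotone cj) : det (of fun x y => lam m (ri x) (cj y)) ∈ nonnegCoeffs ℕ ℤ :=
  det_lam_mem_of_lt m (univ.sup ri + 1) ri cj hri hcj fun x =>
    Nat.lt_succ_of_le (le_sup (mem_univ x))

theorem stmt1_general (m : ℕ) (p : ℕ)
    (ri cj : Fin p → ℕ) (hri : StrictMono ri) (hcj : StrictMono cj) (d : ℕ →₀ ℕ) :
    0 ≤ MvPolynomial.coeff d
        (Matrix.det (Matrix.of fun x y : Fin p => lamEntry m (ri x) (cj y))) := by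
  simp_rw [lamEntry_eq_lam]
  exact mem_nonnegCoeffs.mp (det_lam_mem m ri cj hri hcj.monotone) d

/-- The matrix `Λ^{(m)}` is coefficientwise totally positive over `ℤ[α]`: every minor
(with rows and columns chosen in strictly increasing order) is a polynomial with
nonnegative coefficients. -/
theorem stmt1 (m : ℕ) (hm : 0 < m) (p : ℕ) (hp : 1 ≤ p)
    (ri cj : Fin p → ℕ) (hri : StrictMono ri) (hcj : StrictMono cj) (d : ℕ →₀ ℕ) :
    0 ≤ MvPolynomial.coeff d
        (Matrix.det (Matrix.of fun x y : Fin p => lamEntry m (ri x) (cj y))) :=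
  stmt1_general m p ri cj hri hcj d
end

section
/- Let r ≥ s ≥ 0 with r ≥ 1, let 1 ≤ λ_1 < ⋯ < λ_s ≤ r be integers, and let a_1, …, a_{r+1}, b_1, …, b_s be positive real numbers (with b_s ≠ 1 in the case λ_s = r, so that all coefficients below are defined). For k ≥ −1 set a_i^{(k)} = a_i + ⌈(k+1−i)/(r+1)⌉ and b_j^{(k)} = b_j + ⌈(k+1−λ_j)/r⌉, and for k ∈ ℕ define α_{k+r} by: α_{k+r} = ∏_{1≤i≤r+1, i≠[k]_{r+1}} a_i^{(k)} / ∏_{j=1}^{s} b_j^{(k)} if [k]_r ∉ {λ_1,…,λ_s}, and α_{k+r} = (b_ℓ^{(k)} − a_{[k]_{r+1}}^{(k)}) ∏_{1≤i≤r+1, i≠[k]_{r+1}} a_i^{(k)} / ( (b_ℓ^{(k)} − 1) ∏_{j=1}^{s} b_j^{(k)} ) if [k]_r = λ_ℓ. Then α_{k+r} ≥ 0 for all k ∈ ℕ if and only if: (i) for all 1 ≤ i ≤ r+1 and 1 ≤ j ≤ s, b_j ≥ a_i when i ≤ λ_j and b_j ≥ a_i − 1 when i ≥ λ_j + 1; and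 (ii) when λ_s = r, (b_s − a_{r+1})/(b_s − 1) ≥ 0. Moreover, α_{k+r} > 0 for all k ∈ ℕ if and only if all the inequalities in (i) and (ii) are strict. -/
open Finset Polynomial

/-- The shifted numerator parameters `a_i^{(k)} = a_i + ⌈(k+1−i)/(r+1)⌉`. -/
noncomputable def aShift (r : ℕ) (a : ℕ → ℝ) (k : ℤ) (i : ℕ) : ℝ :=
  a i + ((⌈((k + 1 - (i : ℤ) : ℤ) : ℚ) / ((r : ℚ) + 1)⌉ : ℤ) : ℝ)

/-- The shifted denominator parameters `b_j^{(k)} = b_j + ⌈(k+1−λ_j)/r⌉`. -/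
noncomputable def bShift (r : ℕ) (lam : ℕ → ℕ) (b : ℕ → ℝ) (k : ℤ) (j : ℕ) : ℝ :=
  b j + ((⌈((k + 1 - (lam j : ℤ) : ℤ) : ℚ) / (r : ℚ)⌉ : ℤ) : ℝ)

/-- `[k]_n`, the unique element of `{1,…,n}` congruent to `k` modulo `n`. -/
def modIdx (k n : ℕ) : ℕ := ((((k : ℤ) - 1) % (n : ℤ)) + 1).toNat

/-! When `[k]_r = λ_ℓ`, write `k = λ_ℓ + t r = i + m (r + 1)` with `i = [k]_{r+1}`. Then
`b_ℓ^{(k)} = b_ℓ + t + 1` and `a_i^{(k)} = a_i + m + 1`, so `α_{k+r}` has the sign of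
`(b_ℓ - a_i + (t - m)) / (b_ℓ + t)`; for all other `k` it is positive. As
`(r + 1)(t - m) = t + i - λ_ℓ`, for `t ≥ 0` we get `t - m ≥ 0`, and `t - m ≥ 1` when `i > λ_ℓ`,
which gives sufficiency of (i); the only case `t < 0` is `k = 0`, `λ_ℓ = r`, governed by (ii).
Conversely `t = λ_j - i` (resp. `t = λ_j + r + 1 - i`) realises `i` with `t - m = 0` (resp. `1`),
so every inequality of (i) is the sign of some `α_{k+r}`. -/

lemma modIdx_eq_iff {k n c : ℕ} (hn : 1 ≤ n) :
    modIdx k n = c ↔ 1 ≤ c ∧ c ≤ n ∧ (n : ℤ) ∣ k - c := by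
  have hn' : (0 : ℤ) < n := by exact_mod_cast hn
  have h0 := Int.emod_nonneg ((k : ℤ) - 1) hn'.ne'
  have h1 := Int.emod_lt_of_pos ((k : ℤ) - 1) hn'
  constructor
  · rintro rfl
    have := Int.mul_ediv_add_emod ((k : ℤ) - 1) n
    refine ⟨?_, ?_, ((k : ℤ) - 1) / n, ?_⟩ <;> unfold modIdx <;> omega
  · rintro ⟨hc1, hc2, w, hw⟩
    have : ((k : ℤ) - 1) % n = c - 1 := by
      rw [show (k : ℤ) - 1 = (c - 1) + n * w by omega, Int.add_mul_emod_self_left]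
      exact Int.emod_eq_of_lt (by omega) (by omega)
    unfold modIdx
    omega

lemma modIdx_add_mul {n c : ℕ} (hn : 1 ≤ n) (hc1 : 1 ≤ c) (hc2 : c ≤ n) (t : ℕ) :
    modIdx (c + t * n) n = c :=
  (modIdx_eq_iff hn).2 ⟨hc1, hc2, t, by push_cast; ring⟩

section Ceil

variable {K : Type*} [Field K] [LinearOrder K] [IsStrictOrderedRing K] [FloorRing K]

theorem Int.ceil_mul_add_one_div {n : K} (hn : 1 ≤ n) (d : ℤ) :
    ⌈((d : K) * n + 1) / n⌉ = d + 1 := by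
  have hn0 : 0 < n := one_pos.trans_le hn
  have h1 : ⌈1 / n⌉ = 1 :=
    Int.ceil_eq_iff.2 ⟨by norm_num; positivity, by push_cast; rwa [div_le_one hn0]⟩
  rw [show ((d : K) * n + 1) / n = 1 / n + d by field_simp; ring, Int.ceil_add_intCast, h1,
    add_comm]

theorem Int.ceil_div_nonneg {x n : K} (hn : 0 < n) (h : -n < x) : 0 ≤ ⌈x / n⌉ := by
  have : (-1 : ℤ) < ⌈x / n⌉ := by
    rw [Int.lt_ceil, lt_div_iff₀ hn]
    push_cast
    linarith
  omega

end Ceil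

section Shift

variable {r : ℕ}

lemma aShift_eq_of_sub_eq (a : ℕ → ℝ) {k m : ℤ} {i : ℕ} (h : k - i = (r + 1) * m) :
    aShift r a k i = a i + (m + 1) := by
  have h' : ((k + 1 - i : ℤ) : ℚ) = m * ((r : ℚ) + 1) + 1 := by
    have hq : (k : ℚ) - i = ((r : ℚ) + 1) * m := by exact_mod_cast h
    push_cast
    linear_combination hq
  rw [aShift, h', Int.ceil_mul_add_one_div (by simp)]
  push_cast
  ring

lemma bShift_eq_of_sub_eq (hr : 1 ≤ r) (lam : ℕ → ℕ) (b : ℕ → ℝ) {k t : ℤ} {j : ℕ}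
    (h : k - lam j = r * t) : bShift r lam b k j = b j + (t + 1) := by
  have h' : ((k + 1 - lam j : ℤ) : ℚ) = t * (r : ℚ) + 1 := by
    have hq : (k : ℚ) - lam j = r * t := by exact_mod_cast h
    push_cast
    linear_combination hq
  rw [bShift, h', Int.ceil_mul_add_one_div (by exact_mod_cast hr)]
  push_cast
  ring

lemma le_aShift (a : ℕ → ℝ) (k : ℕ) {i : ℕ} (hi : i ≤ r + 1) : a i ≤ aShift r a k i := by
  have hi' : (i : ℚ) ≤ r + 1 := by exact_mod_cast hi
  have hk : (0 : ℚ) ≤ k := k.cast_nonneg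
  have : 0 ≤ ⌈((k + 1 - i : ℤ) : ℚ) / ((r : ℚ) + 1)⌉ :=
    Int.ceil_div_nonneg (by positivity) (by push_cast; linarith)
  exact le_add_of_nonneg_right (Int.cast_nonneg this)

lemma le_bShift (hr : 1 ≤ r) (lam : ℕ → ℕ) (b : ℕ → ℝ) (k : ℕ) {j : ℕ} (hj : lam j ≤ r) :
    b j ≤ bShift r lam b k j := by
  have hj' : (lam j : ℚ) ≤ r := by exact_mod_cast hj
  have hk : (0 : ℚ) ≤ k := k.cast_nonneg
  have : 0 ≤ ⌈((k + 1 - lam j : ℤ) : ℚ) / (r : ℚ)⌉ :=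
    Int.ceil_div_nonneg (by positivity) (by push_cast; linarith)
  exact le_add_of_nonneg_right (Int.cast_nonneg this)

end Shift

/-- What the argument uses of `0 ≤ ·` and `0 < ·`, so that both halves of the theorem come from
one proof. -/
structure SignCondition (p : ℝ → Prop) : Prop where
  of_pos {x : ℝ} : 0 < x → p x
  mono {x y : ℝ} : x ≤ y → p x → p y
  mul_pos_iff {x c : ℝ} : 0 < c → (p (x * c) ↔ p x)

namespace SignCondition

variable {p : ℝ → Prop}

theorem nonneg : SignCondition (0 ≤ ·) :=
  ⟨le_of_lt, fun hxy hx => hx.trans hxy, mul_nonneg_iff_of_pos_right⟩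

theorem pos : SignCondition (0 < ·) :=
  ⟨id, fun hxy hx => hx.trans_le hxy, mul_pos_iff_of_pos_right⟩

theorem div_pos_iff (hp : SignCondition p) {x c : ℝ} (hc : 0 < c) : p (x / c) ↔ p x :=
  hp.mul_pos_iff (inv_pos.2 hc)

theorem mul_div_mul_iff (hp : SignCondition p) {x y P Q : ℝ} (hP : 0 < P) (hQ : 0 < Q) :
    p (x * P / (y * Q)) ↔ p (x / y) := by
  rw [mul_div_mul_comm]
  exact hp.mul_pos_iff (div_pos hP hQ)

end SignCondition

/-- When `[k]_r = λ_ℓ`, the coefficient `α_{k+r}` is this times a positive factor. -/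
noncomputable def reducedCoeff (r : ℕ) (lam : ℕ → ℕ) (a b : ℕ → ℝ) (k ℓ : ℕ) : ℝ :=
  (bShift r lam b k ℓ - aShift r a k (modIdx k (r + 1))) / (bShift r lam b k ℓ - 1)

section ReducedCoeff

variable {r : ℕ} {lam : ℕ → ℕ} {a b : ℕ → ℝ}

lemma reducedCoeff_eq (hr : 1 ≤ r) {k ℓ i : ℕ} {t m : ℤ} (hi : modIdx k (r + 1) = i)
    (ht : (k : ℤ) - lam ℓ = r * t) (hm : (k : ℤ) - i = (r + 1) * m) :
    reducedCoeff r lam a b k ℓ = (b ℓ - (a i - (t - m))) / (b ℓ + t) := by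
  rw [reducedCoeff, hi, bShift_eq_of_sub_eq hr lam b ht, aShift_eq_of_sub_eq a hm]
  ring_nf

lemma reducedCoeff_zero (hr : 1 ≤ r) {ℓ : ℕ} (hℓ : lam ℓ = r) :
    reducedCoeff r lam a b 0 ℓ = (b ℓ - a (r + 1)) / (b ℓ - 1) := by
  have hi : modIdx 0 (r + 1) = r + 1 :=
    (modIdx_eq_iff (by omega)).2 ⟨by omega, le_rfl, -1, by push_cast; ring⟩
  rw [reducedCoeff_eq hr hi (t := -1) (m := -1) (by push_cast [hℓ]; ring) (by push_cast; ring)]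
  ring_nf

lemma reducedCoeff_add_mul (hr : 1 ≤ r) {j i t e : ℕ} (hi1 : 1 ≤ i) (hi2 : i ≤ r + 1)
    (ht : (t : ℤ) = lam j - i + e * (r + 1)) :
    reducedCoeff r lam a b (lam j + t * r) j = (b j - (a i - e)) / (b j + t) := by
  have hi : modIdx (lam j + t * r) (r + 1) = i :=
    (modIdx_eq_iff (by omega)).2 ⟨hi1, hi2, t - e, by push_cast; linear_combination -ht⟩
  rw [reducedCoeff_eq hr hi (t := t) (m := t - e) (by push_cast; ring)
    (by push_cast; linear_combination -ht)]
  push_cast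
  ring

end ReducedCoeff

section Coefficients

variable {r s : ℕ} {lam : ℕ → ℕ} {a b α : ℕ → ℝ} {p : ℝ → Prop}

lemma prod_aShift_pos (ha : ∀ i, 1 ≤ i → i ≤ r + 1 → 0 < a i) (k c : ℕ) :
    0 < ∏ i ∈ (Icc 1 (r + 1)).erase c, aShift r a k i :=
  prod_pos fun i hi => by
    obtain ⟨hi1, hi2⟩ := mem_Icc.1 (mem_of_mem_erase hi)
    exact (ha i hi1 hi2).trans_le (le_aShift a k hi2)

lemma prod_bShift_pos (hr : 1 ≤ r) (hlam : ∀ j, 1 ≤ j → j ≤ s → lam j ≤ r)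
    (hb : ∀ j, 1 ≤ j → j ≤ s → 0 < b j) (k : ℕ) :
    0 < ∏ j ∈ Icc 1 s, bShift r lam b k j :=
  prod_pos fun j hj => by
    obtain ⟨hj1, hj2⟩ := mem_Icc.1 hj
    exact (hb j hj1 hj2).trans_le (le_bShift hr lam b k (hlam j hj1 hj2))

theorem SignCondition.reducedCoeff_of_sub (hp : SignCondition p) (hr : 1 ≤ r)
    (hlam : ∀ j, 1 ≤ j → j ≤ s → lam j ≤ r)
    (hlam2 : ∀ j j', 1 ≤ j → j < j' → j' ≤ s → lam j < lam j')
    (hb : ∀ j, 1 ≤ j → j ≤ s → 0 < b j)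
    (hcond : ∀ i j, 1 ≤ i → i ≤ r + 1 → 1 ≤ j → j ≤ s →
      (i ≤ lam j → p (b j - a i)) ∧ (lam j + 1 ≤ i → p (b j - (a i - 1))))
    (hbd : 1 ≤ s → lam s = r → p ((b s - a (r + 1)) / (b s - 1)))
    {k ℓ : ℕ} (hℓ1 : 1 ≤ ℓ) (hℓ2 : ℓ ≤ s) (hkℓ : modIdx k r = lam ℓ) :
    p (reducedCoeff r lam a b k ℓ) := by
  obtain ⟨-, -, t, ht⟩ := (modIdx_eq_iff hr).1 hkℓ
  obtain ⟨hi1, hi2, m, hm⟩ := (modIdx_eq_iff (k := k) (n := r + 1) (by omega)).1 rfl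
  push_cast at hm
  have hℓr := hlam ℓ hℓ1 hℓ2
  rcases lt_or_ge t 0 with ht0 | ht0
  · have hrt : (r : ℤ) * t ≤ -r := by nlinarith
    obtain ⟨rfl, hℓr'⟩ : k = 0 ∧ lam ℓ = r := by omega
    obtain rfl : ℓ = s := by
      by_contra hne
      have := hlam2 ℓ s hℓ1 (by omega) le_rfl
      have := hlam s (by omega) le_rfl
      omega
    rw [reducedCoeff_zero hr hℓr']
    exact hbd (by omega) hℓr'
  · set i := modIdx k (r + 1)
    have hden : 0 < b ℓ + t := add_pos_of_pos_of_nonneg (hb ℓ hℓ1 hℓ2) (by exact_mod_cast ht0)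
    rw [reducedCoeff_eq hr rfl ht hm, hp.div_pos_iff hden]
    have hrel : ((r : ℤ) + 1) * (t - m) = t + i - lam ℓ := by linear_combination hm - ht
    rcases le_or_gt i (lam ℓ) with hil | hli
    · refine hp.mono ?_ ((hcond i ℓ hi1 hi2 hℓ1 hℓ2).1 hil)
      have : (0 : ℝ) ≤ t - m := by exact_mod_cast (by nlinarith : 0 ≤ t - m)
      linarith
    · refine hp.mono ?_ ((hcond i ℓ hi1 hi2 hℓ1 hℓ2).2 hli)
      have : (1 : ℝ) ≤ t - m := by exact_mod_cast (by nlinarith : 1 ≤ t - m)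
      linarith

theorem SignCondition.sub_of_reducedCoeff (hp : SignCondition p) (hr : 1 ≤ r) {j : ℕ}
    (hj1 : 1 ≤ lam j) (hj2 : lam j ≤ r) (hb : 0 < b j)
    (h : ∀ k, modIdx k r = lam j → p (reducedCoeff r lam a b k j))
    {i e t : ℕ} (hi1 : 1 ≤ i) (hi2 : i ≤ r + 1) (ht : (t : ℤ) = lam j - i + e * (r + 1)) :
    p (b j - (a i - e)) := by
  have := h _ (modIdx_add_mul hr hj1 hj2 t)
  rwa [reducedCoeff_add_mul hr hi1 hi2 ht, hp.div_pos_iff (by positivity)] at this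

theorem forall_sign_alpha_iff (hp : SignCondition p) (hr : 1 ≤ r)
    (hlam1 : ∀ j, 1 ≤ j → j ≤ s → 1 ≤ lam j ∧ lam j ≤ r)
    (hlam2 : ∀ j j', 1 ≤ j → j < j' → j' ≤ s → lam j < lam j')
    (ha : ∀ i, 1 ≤ i → i ≤ r + 1 → 0 < a i)
    (hbpos : ∀ j, 1 ≤ j → j ≤ s → 0 < b j)
    (hα1 : ∀ k : ℕ, (∀ ℓ, 1 ≤ ℓ → ℓ ≤ s → modIdx k r ≠ lam ℓ) →
      α (k + r) =
        (∏ i ∈ (Finset.Icc 1 (r + 1)).erase (modIdx k (r + 1)), aShift r a (k : ℤ) i) /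
          ∏ j ∈ Finset.Icc 1 s, bShift r lam b (k : ℤ) j)
    (hα2 : ∀ k ℓ, 1 ≤ ℓ → ℓ ≤ s → modIdx k r = lam ℓ →
      α (k + r) =
        ((bShift r lam b (k : ℤ) ℓ - aShift r a (k : ℤ) (modIdx k (r + 1))) *
            ∏ i ∈ (Finset.Icc 1 (r + 1)).erase (modIdx k (r + 1)), aShift r a (k : ℤ) i) /
          ((bShift r lam b (k : ℤ) ℓ - 1) *
            ∏ j ∈ Finset.Icc 1 s, bShift r lam b (k : ℤ) j)) :
    (∀ k : ℕ, p (α (k + r))) ↔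
      (∀ i j, 1 ≤ i → i ≤ r + 1 → 1 ≤ j → j ≤ s →
          (i ≤ lam j → p (b j - a i)) ∧ (lam j + 1 ≤ i → p (b j - (a i - 1)))) ∧
        (1 ≤ s → lam s = r → p ((b s - a (r + 1)) / (b s - 1))) := by
  have hlam : ∀ j, 1 ≤ j → j ≤ s → lam j ≤ r := fun j h1 h2 => (hlam1 j h1 h2).2
  have hmatched : ∀ k ℓ, 1 ≤ ℓ → ℓ ≤ s → modIdx k r = lam ℓ →
      (p (α (k + r)) ↔ p (reducedCoeff r lam a b k ℓ)) := fun k ℓ h1 h2 hkℓ => by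
    rw [hα2 k ℓ h1 h2 hkℓ]
    exact hp.mul_div_mul_iff (prod_aShift_pos ha k _) (prod_bShift_pos hr hlam hbpos k)
  constructor
  · intro h
    have hred : ∀ j, 1 ≤ j → j ≤ s → ∀ k, modIdx k r = lam j → p (reducedCoeff r lam a b k j) :=
      fun j h1 h2 k hk => (hmatched k j h1 h2 hk).1 (h k)
    refine ⟨fun i j hi1 hi2 hj1 hj2 => ⟨fun hij => ?_, fun hij => ?_⟩, fun hs hls => ?_⟩
    · simpa using hp.sub_of_reducedCoeff hr (hlam1 j hj1 hj2).1 (hlam j hj1 hj2)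
        (hbpos j hj1 hj2) (hred j hj1 hj2) hi1 hi2 (e := 0) (t := lam j - i)
        (by push_cast [hij]; ring)
    · simpa using hp.sub_of_reducedCoeff hr (hlam1 j hj1 hj2).1 (hlam j hj1 hj2)
        (hbpos j hj1 hj2) (hred j hj1 hj2) hi1 hi2 (e := 1) (t := lam j + (r + 1) - i)
        (by push_cast [show i ≤ lam j + (r + 1) by omega]; ring)
    · have h0 : modIdx 0 r = lam s :=
        (modIdx_eq_iff hr).2 ⟨by omega, hls.le, -1, by push_cast [hls]; ring⟩
      have := hred s hs le_rfl 0 h0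
      rwa [reducedCoeff_zero hr hls] at this
  · rintro ⟨hcond, hbd⟩ k
    by_cases hk : ∃ ℓ, 1 ≤ ℓ ∧ ℓ ≤ s ∧ modIdx k r = lam ℓ
    · obtain ⟨ℓ, h1, h2, hkℓ⟩ := hk
      exact (hmatched k ℓ h1 h2 hkℓ).2
        (hp.reducedCoeff_of_sub hr hlam hlam2 hbpos hcond hbd h1 h2 hkℓ)
    · push Not at hk
      rw [hα1 k hk]
      exact hp.of_pos (div_pos (prod_aShift_pos ha k _) (prod_bShift_pos hr hlam hbpos k))

end Coefficients

theorem stmt10_general (r s : ℕ) (hr : 1 ≤ r)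
    (lam : ℕ → ℕ)
    (hlam1 : ∀ j, 1 ≤ j → j ≤ s → 1 ≤ lam j ∧ lam j ≤ r)
    (hlam2 : ∀ j j', 1 ≤ j → j < j' → j' ≤ s → lam j < lam j')
    (a b : ℕ → ℝ)
    (ha : ∀ i, 1 ≤ i → i ≤ r + 1 → 0 < a i)
    (hbpos : ∀ j, 1 ≤ j → j ≤ s → 0 < b j)
    (α : ℕ → ℝ)
    (hα1 : ∀ k : ℕ, (∀ ℓ, 1 ≤ ℓ → ℓ ≤ s → modIdx k r ≠ lam ℓ) →
      α (k + r) =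
        (∏ i ∈ (Finset.Icc 1 (r + 1)).erase (modIdx k (r + 1)), aShift r a (k : ℤ) i) /
          ∏ j ∈ Finset.Icc 1 s, bShift r lam b (k : ℤ) j)
    (hα2 : ∀ k ℓ, 1 ≤ ℓ → ℓ ≤ s → modIdx k r = lam ℓ →
      α (k + r) =
        ((bShift r lam b (k : ℤ) ℓ - aShift r a (k : ℤ) (modIdx k (r + 1))) *
            ∏ i ∈ (Finset.Icc 1 (r + 1)).erase (modIdx k (r + 1)), aShift r a (k : ℤ) i) /
          ((bShift r lam b (k : ℤ) ℓ - 1) *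
            ∏ j ∈ Finset.Icc 1 s, bShift r lam b (k : ℤ) j)) :
    ((∀ k : ℕ, 0 ≤ α (k + r)) ↔
      ((∀ i j, 1 ≤ i → i ≤ r + 1 → 1 ≤ j → j ≤ s →
          (i ≤ lam j → a i ≤ b j) ∧ (lam j + 1 ≤ i → a i - 1 ≤ b j)) ∧
        (1 ≤ s → lam s = r → 0 ≤ (b s - a (r + 1)) / (b s - 1)))) ∧
    ((∀ k : ℕ, 0 < α (k + r)) ↔
      ((∀ i j, 1 ≤ i → i ≤ r + 1 → 1 ≤ j → j ≤ s →
          (i ≤ lam j → a i < b j) ∧ (lam j + 1 ≤ i → a i - 1 < b j)) ∧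
        (1 ≤ s → lam s = r → 0 < (b s - a (r + 1)) / (b s - 1)))) := by
  have hnonneg := forall_sign_alpha_iff SignCondition.nonneg hr hlam1 hlam2 ha hbpos hα1 hα2
  have hpos := forall_sign_alpha_iff SignCondition.pos hr hlam1 hlam2 ha hbpos hα1 hα2
  simp only [sub_nonneg, sub_pos] at hnonneg hpos
  exact ⟨hnonneg, hpos⟩

/-- Necessary and sufficient conditions for nonnegativity (resp. positivity) of all
branched-continued-fraction coefficients `α_{k+r}` (case `r ≥ s`, positive parameters):
`α_{k+r} ≥ 0` for all `k` iff `b_j ≥ a_i` for `i ≤ λ_j`, `b_j ≥ a_i − 1` for `i ≥ λ_j+1`,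
and `(b_s − a_{r+1})/(b_s − 1) ≥ 0` when `λ_s = r`; and `α_{k+r} > 0` for all `k` iff all
those inequalities are strict. -/
theorem stmt10 (r s : ℕ) (hr : 1 ≤ r) (hs : s ≤ r)
    (lam : ℕ → ℕ)
    (hlam1 : ∀ j, 1 ≤ j → j ≤ s → 1 ≤ lam j ∧ lam j ≤ r)
    (hlam2 : ∀ j j', 1 ≤ j → j < j' → j' ≤ s → lam j < lam j')
    (a b : ℕ → ℝ)
    (ha : ∀ i, 1 ≤ i → i ≤ r + 1 → 0 < a i)
    (hbpos : ∀ j, 1 ≤ j → j ≤ s → 0 < b j)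
    (hbs : 1 ≤ s → lam s = r → b s ≠ 1)
    (α : ℕ → ℝ)
    (hα1 : ∀ k : ℕ, (∀ ℓ, 1 ≤ ℓ → ℓ ≤ s → modIdx k r ≠ lam ℓ) →
      α (k + r) =
        (∏ i ∈ (Finset.Icc 1 (r + 1)).erase (modIdx k (r + 1)), aShift r a (k : ℤ) i) /
          ∏ j ∈ Finset.Icc 1 s, bShift r lam b (k : ℤ) j)
    (hα2 : ∀ k ℓ, 1 ≤ ℓ → ℓ ≤ s → modIdx k r = lam ℓ →
      α (k + r) =
        ((bShift r lam b (k : ℤ) ℓ - aShift r a (k : ℤ) (modIdx k (r + 1))) *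
            ∏ i ∈ (Finset.Icc 1 (r + 1)).erase (modIdx k (r + 1)), aShift r a (k : ℤ) i) /
          ((bShift r lam b (k : ℤ) ℓ - 1) *
            ∏ j ∈ Finset.Icc 1 s, bShift r lam b (k : ℤ) j)) :
    ((∀ k : ℕ, 0 ≤ α (k + r)) ↔
      ((∀ i j, 1 ≤ i → i ≤ r + 1 → 1 ≤ j → j ≤ s →
          (i ≤ lam j → a i ≤ b j) ∧ (lam j + 1 ≤ i → a i - 1 ≤ b j)) ∧
        (1 ≤ s → lam s = r → 0 ≤ (b s - a (r + 1)) / (b s - 1)))) ∧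
    ((∀ k : ℕ, 0 < α (k + r)) ↔
      ((∀ i j, 1 ≤ i → i ≤ r + 1 → 1 ≤ j → j ≤ s →
          (i ≤ lam j → a i < b j) ∧ (lam j + 1 ≤ i → a i - 1 < b j)) ∧
        (1 ≤ s → lam s = r → 0 < (b s - a (r + 1)) / (b s - 1)))) :=
  stmt10_general r s hr lam hlam1 hlam2 a b ha hbpos α hα1 hα2
end
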